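/- For any nonzero Golden codewords X₁, X₂ ∈ 𝒢 = (1/√5)·A·𝒪, one has ‖X̃₂X₁‖_F² ≥ 2/5. -/

import Mathlib

/-!
Since `‖M‖_F² ≥ 2 |det M|` and `det (X̃₂ X₁) = det X₂ · det X₁`, it suffices that
`|det X|² ≥ 1/5` for nonzero `X ∈ 𝒢`. As `|det A|² = 5`, this says that the Gaussian integer
`det W = N(w₁) - i N(w₂)` is nonzero for nonzero `W ∈ 𝒪`, `N` being the norm form of `ℤ[θ]`.
Clearing denominators, `det W = 0` becomes `P² - 5Q² = i (R² - 5S²)` over `ℤ[i]`. Since `i` is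
not a square modulo `5`, this forces `5 ∣ P, R`, then `5 ∣ Q, S`, and the quotient by `5` is again
a solution; so every solution is divisible by all powers of `5`, hence zero.
-/

open Matrix

/-- The golden number θ = (1+√5)/2, as a complex number. -/
noncomputable def gold : ℂ := (1 + Real.sqrt 5) / 2

/-- Squared Frobenius norm of a 2×2 complex matrix. -/
noncomputable def fro2 (M : Matrix (Fin 2) (Fin 2) ℂ) : ℝ :=
  ∑ i, ∑ j, ‖M i j‖ ^ 2

/-- The element `a + bθ + i(c + dθ)` of `ℤ[i,θ]`. -/
noncomputable def zit (a b c d : ℤ) : ℂ :=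
  (a : ℂ) + b * gold + Complex.I * ((c : ℂ) + d * gold)

/-- Its conjugate under `θ ↦ 1 − θ`. -/
noncomputable def zitBar (a b c d : ℤ) : ℂ :=
  (a : ℂ) + b * (1 - gold) + Complex.I * ((c : ℂ) + d * (1 - gold))

/-- The matrix `[[w₁, w₂], [i·w̄₂, w̄₁]]` of the order `𝒪`, with
`w₁ = a + bθ + i(c+dθ)` and `w₂ = e + fθ + i(g+hθ)`. -/
noncomputable def Omat (a b c d e f g h : ℤ) : Matrix (Fin 2) (Fin 2) ℂ :=
  !![zit a b c d, zit e f g h;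
     Complex.I * zitBar e f g h, zitBar a b c d]

/-- Membership in the order `𝒪`. -/
def inO (W : Matrix (Fin 2) (Fin 2) ℂ) : Prop :=
  ∃ a b c d e f g h : ℤ, W = Omat a b c d e f g h

/-- `α = 1 + i·θ̄ = 1 + i(1−θ)`. -/
noncomputable def alphaG : ℂ := 1 + Complex.I * (1 - gold)

/-- `ᾱ = 1 + i·θ`. -/
noncomputable def alphaBarG : ℂ := 1 + Complex.I * gold

/-- `A = diag(α, ᾱ)`. -/
noncomputable def Amat : Matrix (Fin 2) (Fin 2) ℂ := !![alphaG, 0; 0, alphaBarG]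

/-- Membership in the Golden Code `𝒢 = (1/√5)·A·𝒪`. -/
def inG (X : Matrix (Fin 2) (Fin 2) ℂ) : Prop :=
  ∃ W, inO W ∧ X = ((Real.sqrt 5 : ℂ))⁻¹ • (Amat * W)

local notation "ℤ[i]" => GaussianInt

namespace GaussianInt

open Zsqrtd

theorem five_dvd_iff {x : ℤ[i]} : 5 ∣ x ↔ (x.re : ZMod 5) = 0 ∧ (x.im : ZMod 5) = 0 := by
  rw [show (5 : ℤ[i]) = ((5 : ℤ) : ℤ[i]) by norm_num, intCast_dvd,
    ZMod.intCast_zmod_eq_zero_iff_dvd, ZMod.intCast_zmod_eq_zero_iff_dvd, Nat.cast_ofNat]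

theorem five_dvd_of_five_dvd_sq_sub_sqrtd_mul_sq {P R : ℤ[i]} (h : 5 ∣ P ^ 2 - sqrtd * R ^ 2) :
    5 ∣ P ∧ 5 ∣ R := by
  -- `i` is not a square modulo either prime factor `2 ± i` of `5`
  have key : ∀ a b c d : ZMod 5, a ^ 2 - b ^ 2 + 2 * c * d = 0 → 2 * a * b - c ^ 2 + d ^ 2 = 0 →
      a = 0 ∧ b = 0 ∧ c = 0 ∧ d = 0 := by decide
  simp only [five_dvd_iff, sq, re_sub, im_sub, re_mul, im_mul, re_sqrtd, im_sqrtd] at h ⊢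
  push_cast at h
  obtain ⟨ha, hb, hc, hd⟩ :=
    key P.re P.im R.re R.im (by linear_combination h.1) (by linear_combination h.2)
  exact ⟨⟨ha, hb⟩, hc, hd⟩

theorem exists_of_sq_sub_five_mul_sq_eq {P Q R S : ℤ[i]}
    (h : P ^ 2 - 5 * Q ^ 2 = sqrtd * (R ^ 2 - 5 * S ^ 2)) :
    ∃ P' R', P = 5 * P' ∧ R = 5 * R' ∧ Q ^ 2 - 5 * P' ^ 2 = sqrtd * (S ^ 2 - 5 * R' ^ 2) := by
  obtain ⟨⟨P', rfl⟩, ⟨R', rfl⟩⟩ :=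
    five_dvd_of_five_dvd_sq_sub_sqrtd_mul_sq (P := P) (R := R)
      ⟨Q ^ 2 - sqrtd * S ^ 2, by linear_combination h⟩
  exact ⟨P', R', rfl, rfl, mul_left_cancel₀ (by decide : (5 : ℤ[i]) ≠ 0) (by linear_combination -h)⟩

theorem five_pow_dvd_of_sq_sub_five_mul_sq_eq {P Q R S : ℤ[i]}
    (h : P ^ 2 - 5 * Q ^ 2 = sqrtd * (R ^ 2 - 5 * S ^ 2)) (k : ℕ) :
    5 ^ k ∣ P ∧ 5 ^ k ∣ Q ∧ 5 ^ k ∣ R ∧ 5 ^ k ∣ S := by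
  induction k generalizing P Q R S with
  | zero => simp
  | succ k ih =>
    obtain ⟨P', R', rfl, rfl, h'⟩ := exists_of_sq_sub_five_mul_sq_eq h
    obtain ⟨Q', S', rfl, rfl, h''⟩ := exists_of_sq_sub_five_mul_sq_eq h'
    obtain ⟨hP, hQ, hR, hS⟩ := ih h''
    simp only [pow_succ']
    exact ⟨mul_dvd_mul_left 5 hP, mul_dvd_mul_left 5 hQ, mul_dvd_mul_left 5 hR,
      mul_dvd_mul_left 5 hS⟩

theorem eq_zero_of_forall_five_pow_dvd {x : ℤ[i]} (h : ∀ k, 5 ^ k ∣ x) : x = 0 := by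
  by_contra hx
  have h5 : ¬IsUnit (5 : ℤ[i]) := by
    rw [isUnit_iff_norm_isUnit]
    decide
  obtain ⟨k, hk⟩ := FiniteMultiplicity.of_not_isUnit h5 hx
  exact hk (h _)

theorem eq_zero_of_sq_sub_five_mul_sq_eq {P Q R S : ℤ[i]}
    (h : P ^ 2 - 5 * Q ^ 2 = sqrtd * (R ^ 2 - 5 * S ^ 2)) :
    P = 0 ∧ Q = 0 ∧ R = 0 ∧ S = 0 := by
  have hdvd := five_pow_dvd_of_sq_sub_five_mul_sq_eq h
  exact ⟨eq_zero_of_forall_five_pow_dvd fun k ↦ (hdvd k).1,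
    eq_zero_of_forall_five_pow_dvd fun k ↦ (hdvd k).2.1,
    eq_zero_of_forall_five_pow_dvd fun k ↦ (hdvd k).2.2.1,
    eq_zero_of_forall_five_pow_dvd fun k ↦ (hdvd k).2.2.2⟩

theorem eq_zero_of_goldenNorm_eq_sqrtd_mul {u₁ v₁ u₂ v₂ : ℤ[i]}
    (h : u₁ ^ 2 + u₁ * v₁ - v₁ ^ 2 = sqrtd * (u₂ ^ 2 + u₂ * v₂ - v₂ ^ 2)) :
    u₁ = 0 ∧ v₁ = 0 ∧ u₂ = 0 ∧ v₂ = 0 := by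
  obtain ⟨h₁, rfl, h₂, rfl⟩ :=
    eq_zero_of_sq_sub_five_mul_sq_eq (P := 2 * u₁ + v₁) (Q := v₁) (R := 2 * u₂ + v₂) (S := v₂)
      (by linear_combination 4 * h)
  simp_all

end GaussianInt

theorem gold_sq : gold ^ 2 = gold + 1 := by
  have h5 : (Real.sqrt 5 : ℂ) ^ 2 = 5 := by exact_mod_cast Real.sq_sqrt (by norm_num : (0 : ℝ) ≤ 5)
  unfold gold
  linear_combination h5 / 4

theorem zit_eq (a b c d : ℤ) : zit a b c d = (⟨a, c⟩ : ℤ[i]) + (⟨b, d⟩ : ℤ[i]) * gold := by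
  simp only [zit, GaussianInt.toComplex_def']
  ring

theorem zitBar_eq (a b c d : ℤ) :
    zitBar a b c d = (⟨a, c⟩ : ℤ[i]) + (⟨b, d⟩ : ℤ[i]) * (1 - gold) := by
  simp only [zitBar, GaussianInt.toComplex_def']
  ring

-- `det W = N(w₁) - i N(w₂)`, where `N(u + vθ) = (u + vθ)(u + vθ̄) = u² + uv - v²`
theorem det_Omat (a b c d e f g h : ℤ) :
    (Omat a b c d e f g h).det = (((⟨a, c⟩ : ℤ[i]) ^ 2 + ⟨a, c⟩ * ⟨b, d⟩ - ⟨b, d⟩ ^ 2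
      - Zsqrtd.sqrtd * ((⟨e, g⟩ : ℤ[i]) ^ 2 + ⟨e, g⟩ * ⟨f, h⟩ - ⟨f, h⟩ ^ 2) : ℤ[i]) : ℂ) := by
  have hI : ((Zsqrtd.sqrtd : ℤ[i]) : ℂ) = Complex.I := by simp [GaussianInt.toComplex_def]
  rw [Omat, det_fin_two_of, zit_eq, zit_eq, zitBar_eq, zitBar_eq]
  simp only [map_sub, map_add, map_mul, map_pow, hI]
  linear_combination (-((⟨b, d⟩ : ℤ[i]) : ℂ) ^ 2 + Complex.I * ((⟨f, h⟩ : ℤ[i]) : ℂ) ^ 2) * gold_sq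

theorem one_le_normSq_det_of_inO {W : Matrix (Fin 2) (Fin 2) ℂ} (hW : inO W) (hW0 : W ≠ 0) :
    1 ≤ Complex.normSq W.det := by
  obtain ⟨a, b, c, d, e, f, g, h, rfl⟩ := hW
  rw [det_Omat, ← GaussianInt.intCast_real_norm, ← Int.cast_one, Int.cast_le, Order.one_le_iff_pos,
    GaussianInt.norm_pos]
  intro hD
  obtain ⟨h₁, h₂, h₃, h₄⟩ := GaussianInt.eq_zero_of_goldenNorm_eq_sqrtd_mul (sub_eq_zero.mp hD)
  simp only [Zsqrtd.ext_iff, Zsqrtd.re_zero, Zsqrtd.im_zero] at h₁ h₂ h₃ h₄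
  obtain ⟨rfl, rfl⟩ := h₁
  obtain ⟨rfl, rfl⟩ := h₂
  obtain ⟨rfl, rfl⟩ := h₃
  obtain ⟨rfl, rfl⟩ := h₄
  exact hW0 (by ext i j; fin_cases i <;> fin_cases j <;> simp [Omat, zit, zitBar])

theorem normSq_det_Amat : Complex.normSq Amat.det = 5 := by
  have hdet : Amat.det = 2 + Complex.I := by
    rw [Amat, det_fin_two_of, alphaG, alphaBarG]
    linear_combination gold_sq + (gold - gold ^ 2) * Complex.I_sq
  rw [hdet, Complex.normSq_apply]
  norm_num

theorem inv_five_le_normSq_det_of_inG {X : Matrix (Fin 2) (Fin 2) ℂ} (hX : inG X) (hX0 : X ≠ 0) :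
    5⁻¹ ≤ Complex.normSq X.det := by
  obtain ⟨W, hW, rfl⟩ := hX
  have hW0 : W ≠ 0 := by rintro rfl; simp at hX0
  have h5 : Complex.normSq (Real.sqrt 5 : ℂ) = 5 := by
    rw [Complex.normSq_ofReal, Real.mul_self_sqrt (by norm_num)]
  rw [det_smul, det_mul, Fintype.card_fin, map_mul, map_mul, map_pow, map_inv₀, h5, normSq_det_Amat]
  linarith [one_le_normSq_det_of_inO hW hW0]

theorem two_mul_norm_det_le_fro2 (M : Matrix (Fin 2) (Fin 2) ℂ) : 2 * ‖M.det‖ ≤ fro2 M := by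
  have hdet : ‖M.det‖ ≤ ‖M 0 0‖ * ‖M 1 1‖ + ‖M 0 1‖ * ‖M 1 0‖ := by
    rw [det_fin_two, ← norm_mul, ← norm_mul]
    exact norm_sub_le _ _
  simp only [fro2, Fin.sum_univ_two]
  nlinarith [two_mul_le_add_sq ‖M 0 0‖ ‖M 1 1‖, two_mul_le_add_sq ‖M 0 1‖ ‖M 1 0‖]

/-- For any nonzero Golden codewords `X₁, X₂ ∈ 𝒢`, `‖X̃₂·X₁‖_F² ≥ 2/5`. -/
theorem fro2_product_golden (X₁ X₂ : Matrix (Fin 2) (Fin 2) ℂ)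
    (h₁ : inG X₁) (h₂ : inG X₂) (h₁0 : X₁ ≠ 0) (h₂0 : X₂ ≠ 0) :
    2 / 5 ≤ fro2 (X₂.adjugate * X₁) := by
  have hdet : (X₂.adjugate * X₁).det = X₂.det * X₁.det := by
    rw [det_mul, det_adjugate, Fintype.card_fin, pow_one]
  have hsq : (5⁻¹ : ℝ) ^ 2 ≤ ‖(X₂.adjugate * X₁).det‖ ^ 2 := by
    rw [Complex.sq_norm, hdet, map_mul, sq]
    exact mul_le_mul (inv_five_le_normSq_det_of_inG h₂ h₂0) (inv_five_le_normSq_det_of_inG h₁ h₁0)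
      (by norm_num) (Complex.normSq_nonneg _)
  have hnorm := (pow_le_pow_iff_left₀ (by norm_num) (norm_nonneg _) two_ne_zero).mp hsq
  linarith [two_mul_norm_det_le_fro2 (X₂.adjugate * X₁)]
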